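/- Let M_1, M_2 be Orlicz functions, R_1, R_2 ∈ (0,∞), φ_1(α) = log ∫_ℝ exp(α·M_1(x)) dx, α* < 0 with φ_1'(α*) = R_1, and p_1(x) = exp(α*·M_1(x) - φ_1(α*)). If ∫_ℝ M_2(x)·p_1(x) dx > R_2, then the ratio vol_d(B_{M_1}^d(dR_1) ∩ B_{M_2}^d(dR_2)) / vol_d(B_{M_1}^d(dR_1)) converges to 0 as d → ∞. -/

import Mathlib

/-!
`φ₁` is the cumulant generating function `cgf M₁ volume`, strictly convex on `(-∞, 0)` since `M₁`
is not constant. Both volumes are compared on the exponential scale `exp (d (φ₁ α* - α* R₁))`.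

Upper bound (Chernoff): since `∫ M₂ p₁ > R₂`, a small tilt `β < 0` along `M₂` gives
`∫ exp (α* M₁ + β M₂) < exp (β R₂ + φ₁ α*)`, so the intersection of the balls has volume at most
`u ^ d` for some `u < exp (φ₁ α* - α* R₁)`.

Lower bound: integrate `exp (t ∑ M₁)` for `t` slightly below `α*` and split `ℝ^d` into
`∑ M₁ < d r` (with `r` slightly below `R₁`), the ball `∑ M₁ ≤ d R₁`, and the rest. Tilting to
`t₁ < t` on the first part and to `α* > t` on the last makes both exponentially smaller than the
whole integral (the latter by strict convexity and `φ₁' α* = R₁`), so the ball has volume at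
least `A ^ d - o(A ^ d)` for some `A > u`.
-/

open MeasureTheory Filter

def IsOrlicz (M : ℝ → ℝ) : Prop :=
  ConvexOn ℝ Set.univ M ∧ (∀ t, M (-t) = M t) ∧ M 0 = 0 ∧ ∀ t ≠ 0, 0 < M t

open Real Set Topology ProbabilityTheory

lemma integrable_exp_neg_mul_abs {c : ℝ} (hc : 0 < c) :
    Integrable fun x : ℝ => exp (-c * |x|) := by
  have h : Integrable ((Ici 0).indicator fun x : ℝ => exp (-c * x)) :=
    (integrable_indicator_iff measurableSet_Ici).2
      ((integrableOn_Ici_iff_integrableOn_Ioi).2 (exp_neg_integrableOn_Ioi 0 hc))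
  have h0 (y : ℝ) : 0 ≤ (Ici 0).indicator (fun x : ℝ => exp (-c * x)) y :=
    indicator_nonneg (fun _ _ => (exp_pos _).le) y
  refine (h.add h.comp_neg).mono' (by fun_prop) (Eventually.of_forall fun x => ?_)
  rw [norm_of_nonneg (exp_pos _).le]
  rcases le_total 0 x with hx | hx
  · exact le_add_of_le_of_nonneg (by simp [hx, abs_of_nonneg hx]) (h0 _)
  · exact le_add_of_nonneg_of_le (h0 _) (by simp [hx, abs_of_nonpos hx])

namespace IsOrlicz

variable {M : ℝ → ℝ}

lemma nonneg (hM : IsOrlicz M) (x : ℝ) : 0 ≤ M x := by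
  rcases eq_or_ne x 0 with rfl | hx
  · exact hM.2.2.1.ge
  · exact (hM.2.2.2 x hx).le

lemma continuous (hM : IsOrlicz M) : Continuous M :=
  continuousOn_univ.1 (hM.1.continuousOn isOpen_univ)

lemma mul_abs_sub_one_le (hM : IsOrlicz M) (x : ℝ) : M 1 * (|x| - 1) ≤ M x := by
  have hM1 := (hM.2.2.2 1 one_ne_zero).le
  rcases le_or_gt |x| 1 with hx | hx
  · nlinarith [hM.nonneg x]
  have hx0 : 0 < |x| := one_pos.trans hx
  have h := hM.1.2 (mem_univ 0) (mem_univ |x|) (sub_nonneg.2 (inv_le_one_of_one_le₀ hx.le))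
    (inv_nonneg.2 hx0.le) (sub_add_cancel 1 _)
  have hMx : M |x| = M x := by
    rcases abs_choice x with h | h <;> simp only [h, hM.2.1]
  simp only [smul_eq_mul, mul_zero, zero_add, inv_mul_cancel₀ hx0.ne', hM.2.2.1, hMx] at h
  have : M 1 * |x| ≤ M x := by rwa [inv_mul_eq_div, le_div_iff₀ hx0] at h
  nlinarith

lemma integrable_exp_mul (hM : IsOrlicz M) {t : ℝ} (ht : t < 0) :
    Integrable fun x => exp (t * M x) := by
  have hc : 0 < -t * M 1 := mul_pos (neg_pos.2 ht) (hM.2.2.2 1 one_ne_zero)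
  have := hM.continuous
  refine ((integrable_exp_neg_mul_abs hc).const_mul (exp (-t * M 1))).mono' (by fun_prop)
    (Eventually.of_forall fun x => ?_)
  rw [norm_of_nonneg (exp_pos _).le, ← exp_add]
  exact exp_le_exp.2 (by nlinarith [hM.mul_abs_sub_one_le x])

lemma Iio_subset_interior_integrableExpSet (hM : IsOrlicz M) :
    Iio 0 ⊆ interior (integrableExpSet M volume) :=
  interior_maximal (fun _ ht => hM.integrable_exp_mul ht) isOpen_Iio

lemma strictConvexOn_cgf (hM : IsOrlicz M) : StrictConvexOn ℝ (Iio 0) (cgf M volume) := by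
  refine strictConvexOn_of_deriv2_pos (convex_Iio 0)
    (analyticOn_cgf.continuousOn.mono hM.Iio_subset_interior_integrableExpSet) fun v hv => ?_
  rw [interior_Iio] at hv
  have hv' := hM.Iio_subset_interior_integrableExpSet hv
  rw [← iteratedDeriv_eq_iterate, iteratedDeriv_two_cgf_eq_integral hv']
  set c := deriv (cgf M volume) v
  have hint : Integrable fun x => (M x - c) ^ 2 * exp (v * M x) := by
    have h n := integrable_pow_mul_exp_of_mem_interior_integrableExpSet hv' n
    refine (((h 2).sub ((h 1).const_mul (2 * c))).add ((h 0).const_mul (c ^ 2))).congr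
      (Eventually.of_forall fun x => ?_)
    simp only [Pi.add_apply, Pi.sub_apply]; ring
  obtain ⟨x, hx⟩ : ∃ x, M x ≠ c := by
    by_contra! h
    exact (hM.2.2.2 1 one_ne_zero).ne' ((h 1).trans (h 0).symm ▸ hM.2.2.1)
  have := hM.continuous
  refine div_pos (integral_pos_of_integrable_nonneg_nonzero (x := x) (by fun_prop) hint
    (fun y => by positivity) ?_) (mgf_pos' (NeZero.ne _) (hM.integrable_exp_mul hv))
  exact mul_ne_zero (pow_ne_zero 2 (sub_ne_zero.2 hx)) (exp_pos _).ne'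

end IsOrlicz

section Chernoff

variable {α : Type*} [MeasurableSpace α] {μ : Measure α} {f : α → ℝ}

lemma measure_ge_lt_top_of_integrable_exp (hf : Integrable (fun x => exp (f x)) μ) (c : ℝ) :
    μ {x | c ≤ f x} < ⊤ := by
  simpa only [exp_le_exp] using hf.measure_ge_lt_top (exp_pos c)

lemma measureReal_ge_le_exp_neg_mul_integral_exp (hf : Integrable (fun x => exp (f x)) μ)
    (c : ℝ) : μ.real {x | c ≤ f x} ≤ exp (-c) * ∫ x, exp (f x) ∂μ := by
  have h := mul_meas_ge_le_integral_of_nonneg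
    (Eventually.of_forall fun x => (exp_pos (f x)).le) hf (exp c)
  simp only [exp_le_exp] at h
  rwa [exp_neg, ← div_eq_inv_mul, le_div_iff₀' (exp_pos c)]

end Chernoff

section Pi

variable {ι : Type*} [Fintype ι] {g : ℝ → ℝ}

lemma integrable_exp_sum_apply (hg : Integrable fun y => exp (g y)) :
    Integrable fun x : ι → ℝ => exp (∑ i, g (x i)) := by
  simp_rw [exp_sum]
  exact Integrable.fintype_prod (f := fun _ y => exp (g y)) fun _ => hg

lemma integral_exp_sum_apply (g : ℝ → ℝ) :
    ∫ x : ι → ℝ, exp (∑ i, g (x i)) = (∫ y, exp (g y)) ^ Fintype.card ι := by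
  simp_rw [exp_sum]
  exact integral_fintype_prod_volume_eq_pow fun y => exp (g y)

end Pi

def orliczBall (M : ℝ → ℝ) (d : ℕ) (R : ℝ) : Set (Fin d → ℝ) :=
  {x | ∑ i, M (x i) ≤ d * R}

lemma IsOrlicz.integrable_exp_mul_add_mul {M₁ M₂ : ℝ → ℝ} (hM₁ : IsOrlicz M₁)
    (hM₂ : IsOrlicz M₂) {a b : ℝ} (ha : a < 0) (hb : b ≤ 0) :
    Integrable fun y => exp (a * M₁ y + b * M₂ y) := by
  have := hM₁.continuous; have := hM₂.continuous
  refine (hM₁.integrable_exp_mul ha).mono' (by fun_prop) (Eventually.of_forall fun y => ?_)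
  rw [norm_of_nonneg (exp_pos _).le]
  exact exp_le_exp.2 (by nlinarith [hM₂.nonneg y])

lemma IsOrlicz.volume_orliczBall_inter_le {M₁ M₂ : ℝ → ℝ} (hM₁ : IsOrlicz M₁)
    (hM₂ : IsOrlicz M₂) {a b : ℝ} (ha : a < 0) (hb : b ≤ 0) (d : ℕ) (R₁ R₂ : ℝ) :
    (volume (orliczBall M₁ d R₁ ∩ orliczBall M₂ d R₂)).toReal
      ≤ (exp (-(a * R₁ + b * R₂)) * ∫ y, exp (a * M₁ y + b * M₂ y)) ^ d := by
  set g := fun y => a * M₁ y + b * M₂ y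
  have hg : Integrable fun y => exp (g y) := hM₁.integrable_exp_mul_add_mul hM₂ ha hb
  have hsub : orliczBall M₁ d R₁ ∩ orliczBall M₂ d R₂
      ⊆ {x | d * (a * R₁ + b * R₂) ≤ ∑ i, g (x i)} := by
    rintro x ⟨h₁, h₂⟩
    show _ ≤ ∑ i, (a * M₁ (x i) + b * M₂ (x i))
    rw [Finset.sum_add_distrib, ← Finset.mul_sum, ← Finset.mul_sum]
    linarith [mul_le_mul_of_nonpos_left h₁ ha.le, mul_le_mul_of_nonpos_left h₂ hb]
  have hint := integrable_exp_sum_apply (ι := Fin d) hg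
  calc (volume (orliczBall M₁ d R₁ ∩ orliczBall M₂ d R₂)).toReal
      ≤ volume.real {x : Fin d → ℝ | d * (a * R₁ + b * R₂) ≤ ∑ i, g (x i)} :=
        measureReal_mono hsub (measure_ge_lt_top_of_integrable_exp hint _).ne
    _ ≤ exp (-(d * (a * R₁ + b * R₂))) * ∫ x : Fin d → ℝ, exp (∑ i, g (x i)) :=
        measureReal_ge_le_exp_neg_mul_integral_exp hint _
    _ = _ := by
      rw [integral_exp_sum_apply, Fintype.card_fin, mul_pow, ← exp_nat_mul, neg_mul_eq_mul_neg]

section ThreeRegions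

variable {α : Type*} [MeasurableSpace α] {μ : Measure α} {S : α → ℝ}

/-- Split according to `S < a`, `a ≤ S ≤ b` and `b < S`, and compare `exp (t * S)` with a tilt
`t₁ < t` on the first region and `t₂ > t` on the last one. -/
lemma integral_exp_mul_le_of_tilts (hS : Measurable S) {t₁ t t₂ a b : ℝ} (h₁ : t₁ < t) (h₂ : t < t₂)
    (ht : t ≤ 0) (hi₁ : Integrable (fun x => exp (t₁ * S x)) μ)
    (hi₂ : Integrable (fun x => exp (t₂ * S x)) μ) (hfin : μ {x | S x ≤ b} ≠ ⊤) :
    ∫ x, exp (t * S x) ∂μ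
      ≤ exp ((t - t₁) * a) * ∫ x, exp (t₁ * S x) ∂μ + exp (t * a) * μ.real {x | S x ≤ b}
        + exp ((t - t₂) * b) * ∫ x, exp (t₂ * S x) ∂μ := by
  set E := {x | S x ≤ b}
  have hE : MeasurableSet E := measurableSet_le hS measurable_const
  have hind (x : α) : 0 ≤ E.indicator (fun _ => exp (t * a)) x :=
    indicator_nonneg (fun _ _ => (exp_pos _).le) x
  have hpt (x : α) : exp (t * S x) ≤ exp ((t - t₁) * a) * exp (t₁ * S x)
      + E.indicator (fun _ => exp (t * a)) x + exp ((t - t₂) * b) * exp (t₂ * S x) := by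
    rcases lt_or_ge (S x) a with hxa | hxa
    · have : exp (t * S x) ≤ exp ((t - t₁) * a) * exp (t₁ * S x) := by
        rw [← exp_add]; exact exp_le_exp.2 (by nlinarith)
      exact le_add_of_le_of_nonneg (le_add_of_le_of_nonneg this (hind x)) (by positivity)
    rcases le_or_gt (S x) b with hxb | hxb
    · have : exp (t * S x) ≤ E.indicator (fun _ => exp (t * a)) x := by
        rw [indicator_of_mem (show x ∈ E from hxb)]
        exact exp_le_exp.2 (mul_le_mul_of_nonpos_left hxa ht)
      exact le_add_of_le_of_nonneg (le_add_of_nonneg_of_le (by positivity) this) (by positivity)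
    · have : exp (t * S x) ≤ exp ((t - t₂) * b) * exp (t₂ * S x) := by
        rw [← exp_add]; exact exp_le_exp.2 (by nlinarith)
      exact le_add_of_nonneg_of_le (add_nonneg (by positivity) (hind x)) this
  have hiE : Integrable (E.indicator fun _ => exp (t * a)) μ :=
    (integrable_indicator_iff hE).2 (integrableOn_const hfin)
  calc ∫ x, exp (t * S x) ∂μ
      ≤ ∫ x, (exp ((t - t₁) * a) * exp (t₁ * S x) + E.indicator (fun _ => exp (t * a)) x
          + exp ((t - t₂) * b) * exp (t₂ * S x)) ∂μ :=
        integral_mono (integrable_exp_mul_of_le_of_le hi₁ hi₂ h₁.le h₂.le)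
          (((hi₁.const_mul _).add hiE).add (hi₂.const_mul _)) hpt
    _ = _ := by
      have hi₁E : Integrable (fun x => exp ((t - t₁) * a) * exp (t₁ * S x)
          + E.indicator (fun _ => exp (t * a)) x) μ := (hi₁.const_mul _).add hiE
      rw [integral_add hi₁E (hi₂.const_mul _), integral_add (hi₁.const_mul _) hiE,
        integral_indicator_const _ hE, integral_const_mul, integral_const_mul, smul_eq_mul,
        mul_comm (μ.real E)]

end ThreeRegions

lemma IsOrlicz.volume_orliczBall_ge {M : ℝ → ℝ} (hM : IsOrlicz M) {t₁ t t₂ : ℝ} (h₁ : t₁ < t)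
    (h₂ : t < t₂) (h₀ : t₂ < 0) (r R : ℝ) (d : ℕ) :
    exp (cgf M volume t - t * r) ^ d - exp (cgf M volume t₁ - t₁ * r) ^ d
        - exp (cgf M volume t₂ + (t - t₂) * R - t * r) ^ d
      ≤ (volume (orliczBall M d R)).toReal := by
  set S : (Fin d → ℝ) → ℝ := fun x => ∑ i, M (x i)
  have hS : Measurable S := by have := hM.continuous; fun_prop
  have hint {s : ℝ} (hs : s < 0) : Integrable fun x => exp (s * S x) := by
    simpa only [S, Finset.mul_sum] using integrable_exp_sum_apply (hM.integrable_exp_mul hs)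
  have hpow {s : ℝ} (hs : s < 0) : ∫ x, exp (s * S x) = exp (d * cgf M volume s) := by
    simp only [S, Finset.mul_sum]
    rw [integral_exp_sum_apply (fun y => s * M y), Fintype.card_fin, exp_nat_mul,
      exp_cgf (hM.integrable_exp_mul hs)]
    rfl
  have hfin : volume (orliczBall M d R) ≠ ⊤ := by
    have hneg := integrable_exp_sum_apply (ι := Fin d) (hM.integrable_exp_mul neg_one_lt_zero)
    refine ne_top_of_le_ne_top (measure_ge_lt_top_of_integrable_exp hneg (-(d * R))).ne
      (measure_mono fun x (hx : S x ≤ d * R) => ?_)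
    simp only [mem_ofPred_eq, neg_one_mul, Finset.sum_neg_distrib, neg_le_neg_iff]
    exact hx
  have key := integral_exp_mul_le_of_tilts (a := d * r) hS h₁ h₂ (h₂.trans h₀).le
    (hint (h₁.trans h₂ |>.trans h₀)) (hint h₀) hfin
  rw [hpow (h₂.trans h₀), hpow (h₁.trans h₂ |>.trans h₀), hpow h₀] at key
  have hV : volume.real {x | S x ≤ d * R} = (volume (orliczBall M d R)).toReal := rfl
  rw [hV] at key
  rw [← exp_nat_mul, ← exp_nat_mul, ← exp_nat_mul,
    ← mul_le_mul_iff_of_pos_left (exp_pos (t * (d * r))), mul_sub, mul_sub, ← exp_add, ← exp_add,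
    ← exp_add]
  have eB : exp (t * (d * r) + d * (cgf M volume t₁ - t₁ * r))
      = exp ((t - t₁) * (d * r)) * exp (d * cgf M volume t₁) := by rw [← exp_add]; ring_nf
  have eC : exp (t * (d * r) + d * (cgf M volume t₂ + (t - t₂) * R - t * r))
      = exp ((t - t₂) * (d * R)) * exp (d * cgf M volume t₂) := by rw [← exp_add]; ring_nf
  rw [eB, eC, show t * (d * r) + d * (cgf M volume t - t * r) = d * cgf M volume t by ring]
  linarith

section Tilt

variable {α : Type*} [MeasurableSpace α] {μ : Measure α} {X w : α → ℝ}

/-- The one-sided derivative at `β = 0⁻` of `∫ exp (β X) w` is `∫ X w`; when it exceeds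
`r ∫ w`, a small negative tilt pushes `∫ exp (β X) w` below `exp (β r) ∫ w`. -/
lemma exists_neg_integral_exp_mul_mul_lt (hX : 0 ≤ X) (hw : 0 ≤ w)
    (hXm : AEStronglyMeasurable X μ) (hwi : Integrable w μ)
    (hXw : Integrable (fun x => X x * w x) μ) {r : ℝ}
    (h : r * ∫ x, w x ∂μ < ∫ x, X x * w x ∂μ) :
    ∃ β < 0, ∫ x, exp (β * X x) * w x ∂μ < exp (β * r) * ∫ x, w x ∂μ := by
  have hm (β : ℝ) : AEStronglyMeasurable (fun x => exp (β * X x)) μ :=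
    continuous_exp.comp_aestronglyMeasurable (hXm.const_mul β)
  have hint {β : ℝ} (hβ : β ≤ 0) : Integrable (fun x => exp (β * X x) * w x) μ := by
    refine hwi.mono' ((hm β).mul hwi.1) (Eventually.of_forall fun x => ?_)
    rw [norm_mul, norm_of_nonneg (exp_pos _).le, norm_of_nonneg (hw x)]
    exact mul_le_of_le_one_left (hw x)
      (exp_le_one_iff.2 (mul_nonpos_of_nonpos_of_nonneg hβ (hX x)))
  set F : ℝ → α → ℝ := fun β x => (exp (β * X x) * w x - w x) / β
  have hF (β : ℝ) (x : α) : F β x = (exp (β * X x) - 1) / β * w x := by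
    simp only [F]; ring
  have hlim : Tendsto (fun β => ∫ x, F β x ∂μ) (𝓝[<] 0) (𝓝 (∫ x, X x * w x ∂μ)) := by
    refine tendsto_integral_filter_of_dominated_convergence _
      (Eventually.of_forall fun β => by have := hm β; have := hwi.1; fun_prop) ?_ hXw
      (Eventually.of_forall fun x => ?_)
    · filter_upwards [self_mem_nhdsWithin] with β (hβ : β < 0)
      refine Eventually.of_forall fun x => ?_
      have hq₀ : 0 ≤ (exp (β * X x) - 1) / β := div_nonneg_of_nonpos
        (sub_nonpos.2 (exp_le_one_iff.2 (mul_nonpos_of_nonpos_of_nonneg hβ.le (hX x)))) hβ.le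
      have hq : (exp (β * X x) - 1) / β ≤ X x :=
        (div_le_iff_of_neg hβ).2 (by nlinarith [add_one_le_exp (β * X x)])
      rw [hF, norm_of_nonneg (mul_nonneg hq₀ (hw x))]
      exact mul_le_mul_of_nonneg_right hq (hw x)
    · have hd : HasDerivAt (fun β => exp (β * X x)) (X x) 0 := by
        simpa using ((hasDerivAt_id (0 : ℝ)).mul_const (X x)).exp
      have := (hasDerivAt_iff_tendsto_slope.1 hd).mono_left
        (nhdsWithin_mono _ fun β (hβ : β < 0) => hβ.ne)
      simp only [hF]
      refine (this.congr fun β => ?_).mul_const (w x)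
      simp [slope_def_field]
  obtain ⟨β, hβF, hβ⟩ := ((hlim.eventually (lt_mem_nhds h)).and self_mem_nhdsWithin).exists
  refine ⟨β, hβ, ?_⟩
  have hβ' : β < 0 := hβ
  simp only [F] at hβF
  rw [integral_div, integral_sub (hint hβ'.le) hwi, lt_div_iff_of_neg hβ'] at hβF
  nlinarith [mul_nonneg (sub_nonneg.2 (add_one_le_exp (β * r))) (integral_nonneg (μ := μ) hw)]

end Tilt

lemma IsOrlicz.exists_neg_integral_exp_mul_add_mul_lt {M₁ M₂ : ℝ → ℝ} (hM₁ : IsOrlicz M₁)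
    (hM₂ : IsOrlicz M₂) {a r : ℝ} (ha : a < 0) (hr : 0 ≤ r)
    (h : r * mgf M₁ volume a < ∫ x, M₂ x * exp (a * M₁ x)) :
    ∃ β < 0, ∫ y, exp (a * M₁ y + β * M₂ y) < exp (β * r) * mgf M₁ volume a := by
  have hZ := hM₁.integrable_exp_mul ha
  have hint : Integrable fun x => M₂ x * exp (a * M₁ x) := by
    by_contra hni
    rw [integral_undef hni] at h
    exact h.not_ge (mul_nonneg hr (mgf_pos' (NeZero.ne _) hZ).le)
  obtain ⟨β, hβ, hW⟩ := exists_neg_integral_exp_mul_mul_lt hM₂.nonneg (fun x => (exp_pos _).le)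
    hM₂.continuous.aestronglyMeasurable hZ hint h
  exact ⟨β, hβ, by simpa only [exp_add, mul_comm, mgf] using hW⟩

/-- The tilts and the level `r` for which the outer terms of `IsOrlicz.volume_orliczBall_ge` are
exponentially smaller than the main one, and the main one beats `exp L`. -/
lemma StrictConvexOn.exists_tilts {φ : ℝ → ℝ} (hφ : StrictConvexOn ℝ (Iio 0) φ) {a R L : ℝ}
    (ha : a < 0) (hd : HasDerivAt φ R a) (hL : L < φ a - a * R) :
    ∃ t₁ t r, t₁ < t ∧ t < a ∧ φ t₁ - t₁ * r < φ t - t * r ∧ φ a + (t - a) * R < φ t ∧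
      L < φ t - t * r := by
  set ε := (φ a - a * R - L) / (1 - a)
  have hε : 0 < ε := div_pos (by linarith) (by linarith)
  have hεa : ε * (1 - a) = φ a - a * R - L := div_mul_cancel₀ _ (by linarith)
  have hslope : Tendsto (slope φ a) (𝓝[<] a) (𝓝 R) :=
    (hasDerivAt_iff_tendsto_slope.1 hd).mono_left (nhdsWithin_mono _ fun x (hx : x < a) => hx.ne)
  obtain ⟨t₁, hs₁, ht₁⟩ := ((hslope.eventually (lt_mem_nhds (show R - ε / 2 < R by linarith))).and
    (Ioo_mem_nhdsLT (show a - 1 < a by linarith))).exists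
  have hta : (t₁ + a) / 2 < a := by linarith [ht₁.2]
  have hsl := hφ.slope_lt_of_hasDerivAt (by simp only [mem_Iio]; linarith) (mem_Iio.2 ha) hta hd
  rw [slope_def_field, div_lt_iff₀ (by linarith)] at hsl
  rw [slope_def_field, lt_div_iff_of_neg (by linarith [ht₁.2])] at hs₁
  have hC : φ a + ((t₁ + a) / 2 - a) * R < φ ((t₁ + a) / 2) := by linarith
  refine ⟨t₁, (t₁ + a) / 2, R - ε, by linarith [ht₁.2], hta, by linarith, hC, ?_⟩
  nlinarith [mul_pos (show 0 < (t₁ + a) / 2 - (a - 1) by linarith [ht₁.1]) hε]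

lemma tendsto_div_of_le_pow_of_pow_sub_pow_sub_pow_le {x y : ℕ → ℝ} {u A B C : ℝ} (hu : 0 ≤ u)
    (hB : 0 ≤ B) (hC : 0 ≤ C) (huA : u < A) (hBA : B < A) (hCA : C < A) (hx₀ : ∀ d, 0 ≤ x d)
    (hx : ∀ d, x d ≤ u ^ d) (hy : ∀ d, A ^ d - B ^ d - C ^ d ≤ y d) :
    Tendsto (fun d => x d / y d) atTop (𝓝 0) := by
  have hA : 0 < A := hu.trans_lt huA
  have hq {c : ℝ} (hc₀ : 0 ≤ c) (hc : c < A) : Tendsto (fun d : ℕ => (c / A) ^ d) atTop (𝓝 0) :=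
    tendsto_pow_atTop_nhds_zero_of_lt_one (div_nonneg hc₀ hA.le) ((div_lt_one hA).2 hc)
  have hden : Tendsto (fun d : ℕ => 1 - (B / A) ^ d - (C / A) ^ d) atTop (𝓝 1) := by
    simpa using (tendsto_const_nhds.sub (hq hB hBA)).sub (hq hC hCA)
  have hlim := (hq hu huA).div hden one_ne_zero
  rw [zero_div] at hlim
  have hfac (d : ℕ) : A ^ d - B ^ d - C ^ d = A ^ d * (1 - (B / A) ^ d - (C / A) ^ d) := by
    rw [div_pow, div_pow]; field_simp
  have hpos : ∀ᶠ d in atTop, 0 < A ^ d - B ^ d - C ^ d := by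
    filter_upwards [hden.eventually (lt_mem_nhds one_pos)] with d hd
    rw [hfac]; exact mul_pos (pow_pos hA d) hd
  refine squeeze_zero' ?_ ?_ hlim
  · filter_upwards [hpos] with d hd using div_nonneg (hx₀ d) (hd.trans_le (hy d)).le
  · filter_upwards [hpos] with d hd
    calc x d / y d ≤ u ^ d / (A ^ d - B ^ d - C ^ d) :=
          div_le_div₀ (pow_nonneg hu d) (hx d) hd (hy d)
      _ = (u / A) ^ d / (1 - (B / A) ^ d - (C / A) ^ d) := by
          rw [hfac, div_mul_eq_div_div, ← div_pow]

theorem stmt14_general (M₁ M₂ : ℝ → ℝ) (hM₁ : IsOrlicz M₁) (hM₂ : IsOrlicz M₂)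
    (R₁ R₂ : ℝ) (hR₂ : 0 < R₂)
    (φ₁ : ℝ → ℝ) (hφ₁ : ∀ α, φ₁ α = Real.log (∫ x : ℝ, Real.exp (α * M₁ x)))
    (αs : ℝ) (hαs : αs < 0) (hder : deriv φ₁ αs = R₁)
    (hgt : ∫ x : ℝ, M₂ x * Real.exp (αs * M₁ x - φ₁ αs) > R₂) :
    Tendsto (fun d : ℕ =>
        (volume ({x : Fin d → ℝ | ∑ i, M₁ (x i) ≤ d * R₁}
            ∩ {x : Fin d → ℝ | ∑ i, M₂ (x i) ≤ d * R₂})).toReal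
          / (volume {x : Fin d → ℝ | ∑ i, M₁ (x i) ≤ d * R₁}).toReal)
      atTop (nhds 0) := by
  obtain rfl : φ₁ = cgf M₁ volume := funext hφ₁
  have hZ := hM₁.integrable_exp_mul hαs
  simp_rw [exp_sub, exp_cgf hZ, ← mul_div_assoc] at hgt
  rw [integral_div, gt_iff_lt, lt_div_iff₀ (mgf_pos' (NeZero.ne _) hZ)] at hgt
  obtain ⟨β, hβ, hW⟩ := hM₁.exists_neg_integral_exp_mul_add_mul_lt hM₂ hαs hR₂.le hgt
  set u := exp (-(αs * R₁ + β * R₂)) * ∫ y, exp (αs * M₁ y + β * M₂ y)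
  have hu : 0 < u :=
    mul_pos (exp_pos _) (integral_exp_pos (hM₁.integrable_exp_mul_add_mul hM₂ hαs hβ.le))
  have huΛ : u < exp (cgf M₁ volume αs - αs * R₁) := by
    calc u < exp (-(αs * R₁ + β * R₂)) * (exp (β * R₂) * mgf M₁ volume αs) :=
          mul_lt_mul_of_pos_left hW (exp_pos _)
      _ = _ := by
          rw [exp_sub, exp_cgf hZ, ← mul_assoc, ← exp_add, div_eq_mul_inv, ← exp_neg, mul_comm]
          ring_nf
  have hd : HasDerivAt (cgf M₁ volume) R₁ αs := hder ▸
    (analyticAt_cgf (hM₁.Iio_subset_interior_integrableExpSet hαs)).differentiableAt.hasDerivAt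
  obtain ⟨t₁, t, r, h₁, h₂, hB, hC, hA⟩ :=
    hM₁.strictConvexOn_cgf.exists_tilts hαs hd ((log_lt_iff_lt_exp hu).2 huΛ)
  exact tendsto_div_of_le_pow_of_pow_sub_pow_sub_pow_le hu.le (exp_pos _).le (exp_pos _).le
    ((log_lt_iff_lt_exp hu).1 hA) (exp_lt_exp.2 hB) (exp_lt_exp.2 (by linarith))
    (fun d => ENNReal.toReal_nonneg)
    (fun d => hM₁.volume_orliczBall_inter_le hM₂ hαs hβ.le d R₁ R₂)
    (hM₁.volume_orliczBall_ge h₁ h₂ hαs r R₁)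

theorem stmt14 (M₁ M₂ : ℝ → ℝ) (hM₁ : IsOrlicz M₁) (hM₂ : IsOrlicz M₂)
    (R₁ R₂ : ℝ) (hR₁ : 0 < R₁) (hR₂ : 0 < R₂)
    (φ₁ : ℝ → ℝ) (hφ₁ : ∀ α, φ₁ α = Real.log (∫ x : ℝ, Real.exp (α * M₁ x)))
    (αs : ℝ) (hαs : αs < 0) (hder : deriv φ₁ αs = R₁)
    (hgt : ∫ x : ℝ, M₂ x * Real.exp (αs * M₁ x - φ₁ αs) > R₂) :
    Tendsto (fun d : ℕ =>
        (volume ({x : Fin d → ℝ | ∑ i, M₁ (x i) ≤ d * R₁}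
            ∩ {x : Fin d → ℝ | ∑ i, M₂ (x i) ≤ d * R₂})).toReal
          / (volume {x : Fin d → ℝ | ∑ i, M₁ (x i) ≤ d * R₁}).toReal)
      atTop (nhds 0) :=
  stmt14_general M₁ M₂ hM₁ hM₂ R₁ R₂ hR₂ φ₁ hφ₁ αs hαs hder hgt
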